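/- Let f : ℝ → ℝ be continuous. Define K(y) = ∫₀ʸ exp(−2∫₀ᶻ f(r) dr) dz and v(x) = ∫₀ˣ K(y)·exp(2∫₀ʸ f(r) dr) dy. Then v is C² on ℝ and satisfies (1/2)·v''(x) − f(x)·v'(x) = 1/2 for all x, and v(x) > 0 and v'(x) > 0 for all x > 0. -/

import Mathlib

open intervalIntegral

/-! The substitution `h = K · exp (2F)`, with `F = ∫₀ f` and `K' = exp (-2F)`, turns `v' = h` into
the linear equation `h' = 1 + 2 f h`, which is `(1/2) v'' - f v' = 1/2`. Positivity on `(0, ∞)` holds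
because `K`, hence `h = v'`, hence `v`, are integrals of positive functions from `0`. -/

theorem contDiff_two_of_hasDerivAt {v v' v'' : ℝ → ℝ} (hv : ∀ x, HasDerivAt v (v' x) x)
    (hv' : ∀ x, HasDerivAt v' (v'' x) x) (hv'' : Continuous v'') : ContDiff ℝ 2 v := by
  have hdv : deriv v = v' := funext fun x => (hv x).deriv
  have hdv' : deriv v' = v'' := funext fun x => (hv' x).deriv
  rw [show (2 : WithTop ℕ∞) = 1 + 1 from rfl, contDiff_succ_iff_deriv, hdv,
    contDiff_one_iff_deriv, hdv']
  exact ⟨fun x => (hv x).differentiableAt, by simp, fun x => (hv' x).differentiableAt, hv''⟩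

theorem hasDerivAt_mul_exp_of_hasDerivAt_exp_neg {F K : ℝ → ℝ} {a c x : ℝ}
    (hF : HasDerivAt F a x) (hK : HasDerivAt K (Real.exp (-(c * F x))) x) :
    HasDerivAt (fun y => K y * Real.exp (c * F y))
      (1 + c * a * (K x * Real.exp (c * F x))) x := by
  refine (hK.mul (hF.const_mul c).exp).congr_deriv ?_
  rw [Real.exp_neg, inv_mul_cancel₀ (Real.exp_pos _).ne']
  ring

/-- For `f` continuous, with `K(y) = ∫₀ʸ exp(−2∫₀ᶻ f)` and
`v(x) = ∫₀ˣ K(y)·exp(2∫₀ʸ f) dy`, the function `v` is `C²`, solves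
`(1/2)v'' − f·v' = 1/2`, and `v > 0`, `v' > 0` on `(0,∞)`. -/
theorem stmt3 (f : ℝ → ℝ) (hf : Continuous f)
    (K v : ℝ → ℝ)
    (hK : K = fun y => ∫ z in (0:ℝ)..y, Real.exp (-(2 * ∫ r in (0:ℝ)..z, f r)))
    (hv : v = fun x => ∫ y in (0:ℝ)..x, K y * Real.exp (2 * ∫ r in (0:ℝ)..y, f r)) :
    ContDiff ℝ 2 v ∧
      (∀ x : ℝ, (1/2) * deriv (deriv v) x - f x * deriv v x = 1/2) ∧
      ∀ x : ℝ, 0 < x → 0 < v x ∧ 0 < deriv v x := by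
  set F : ℝ → ℝ := fun z => ∫ r in (0:ℝ)..z, f r
  have hF : ∀ x, HasDerivAt F (f x) x := fun x => (hf.integral_hasStrictDerivAt 0 x).hasDerivAt
  have hF_cont : Continuous F := Differentiable.continuous fun x => (hF x).differentiableAt
  have hK_integrand : Continuous fun z => Real.exp (-(2 * F z)) := by fun_prop
  have hK' : ∀ y, HasDerivAt K (Real.exp (-(2 * F y))) y := hK ▸ fun y =>
    (hK_integrand.integral_hasStrictDerivAt 0 y).hasDerivAt
  have hK_cont : Continuous K := Differentiable.continuous fun x => (hK' x).differentiableAt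
  set h : ℝ → ℝ := fun y => K y * Real.exp (2 * F y)
  have h_cont : Continuous h := by fun_prop
  have hv' : ∀ x, HasDerivAt v (h x) x := hv ▸ fun x =>
    (h_cont.integral_hasStrictDerivAt 0 x).hasDerivAt
  have hh' : ∀ x, HasDerivAt h (1 + 2 * f x * h x) x := fun x =>
    hasDerivAt_mul_exp_of_hasDerivAt_exp_neg (hF x) (hK' x)
  have hdv : deriv v = h := funext fun x => (hv' x).deriv
  have hdh : deriv h = fun x => 1 + 2 * f x * h x := funext fun x => (hh' x).deriv
  have hK_pos : ∀ y, 0 < y → 0 < K y := fun y hy => hK ▸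
    intervalIntegral_pos_of_pos (hK_integrand.intervalIntegrable 0 y) (fun _ => Real.exp_pos _) hy
  have hh_pos : ∀ y, 0 < y → 0 < h y := fun y hy => mul_pos (hK_pos y hy) (Real.exp_pos _)
  refine ⟨contDiff_two_of_hasDerivAt hv' hh' (by fun_prop), fun x => ?_, fun x hx => ⟨?_, ?_⟩⟩
  · rw [hdv, hdh]
    ring
  · exact hv ▸ intervalIntegral_pos_of_pos_on (h_cont.intervalIntegrable 0 x)
      (fun y hy => hh_pos y hy.1) hx
  · exact hdv ▸ hh_pos x hx
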